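/- With G_n as in the context: let i_min = min{i : (i,j) ∈ E for some j} and j_q = max{j : (i_min, j) ∈ E}. Assume that max{j : (i,j) ∈ E} = j_q + 1 and that j − i ≥ 2 for every (i,j) ∈ E. Then for every integer n ≥ 3r, the graph G_n is not cochordal: there exist an integer m ≥ 4 and pairwise distinct vertices a_1, …, a_m forming an induced anticycle of length m in G_n. (By Fröberg's theorem, this yields reg I_n ≥ 3 for all n ≥ 3r.) -/
import Mathlib


/-- Adjacency in the graph `G_n` of the chain. -/
def adjGraph (r n : ℤ) (E : Set (ℤ × ℤ)) (u v : ℤ) : Prop :=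
  (u < v ∧ ∃ e ∈ E, e.1 ≤ u ∧ u - e.1 ≤ v - e.2 ∧ v - e.2 ≤ n - r) ∨
  (v < u ∧ ∃ e ∈ E, e.1 ≤ v ∧ v - e.1 ≤ u - e.2 ∧ u - e.2 ≤ n - r)

/-- `a 0, a 1, …, a (m-1)` is an induced anticycle of length `m` in this
cyclic order. -/
def IsInducedAnticycle (A : ℤ → ℤ → Prop) (m : ℕ) (a : ℕ → ℤ) : Prop :=
  (∀ s, s < m → ∀ t, t < m → s ≠ t → a s ≠ a t) ∧
  (∀ t, t < m → ¬ A (a t) (a ((t + 1) % m))) ∧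
  (∀ s, s < m → ∀ t, t < m → s ≠ t → (s + 1) % m ≠ t → (t + 1) % m ≠ s →
    A (a s) (a t))

theorem adjGraph_symm' {r n : ℤ} {E : Set (ℤ × ℤ)} {u v : ℤ}
    (h : adjGraph r n E u v) : adjGraph r n E v u := by
  unfold adjGraph at h ⊢; exact Or.symm h

theorem adj_two_le' {r n : ℤ} {E : Set (ℤ × ℤ)}
    (hgap : ∀ e ∈ E, 2 ≤ e.2 - e.1) {u v : ℤ}
    (h : adjGraph r n E u v) (huv : u < v) : u + 2 ≤ v := by
  unfold adjGraph at h
  rcases h with ⟨_, e, heE, _, h2, _⟩ | ⟨hvu, _⟩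
  · have := hgap e heE; omega
  · omega

theorem nextC_ex (r n : ℤ) (E : Set (ℤ × ℤ))
    (hgap : ∀ e ∈ E, 2 ≤ e.2 - e.1) (u : ℤ) :
    ∃ w : ℤ, u + 1 ≤ w ∧ (∀ v, u < v → v ≤ w → ¬ adjGraph r n E u v) ∧
      (∀ v, u < v → adjGraph r n E u v → w + 1 ≤ v) ∧
      ((∃ v, u < v ∧ adjGraph r n E u v) → adjGraph r n E u (w + 1)) := by
  by_cases h : ∃ v, u < v ∧ adjGraph r n E u v
  · obtain ⟨L, ⟨hLu, hLadj⟩, hLmin⟩ :=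
      Int.exists_least_of_bdd (P := fun v => u < v ∧ adjGraph r n E u v)
        ⟨u, fun z hz => hz.1.le⟩ h
    have hL2 : u + 2 ≤ L := adj_two_le' hgap hLadj hLu
    refine ⟨L - 1, by omega, ?_, ?_, ?_⟩
    · intro v hv1 hv2 hadj
      have := hLmin v ⟨hv1, hadj⟩; omega
    · intro v hv hadj; have := hLmin v ⟨hv, hadj⟩; omega
    · intro _
      have : L - 1 + 1 = L := by omega
      rw [this]; exact hLadj
  · refine ⟨u + 1, le_refl _, ?_, ?_, fun hh => absurd hh h⟩
    · intro v h1 _ hadj; exact h ⟨v, h1, hadj⟩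
    · intro v h1 hadj; exact absurd ⟨v, h1, hadj⟩ h

noncomputable def nextCF (r n : ℤ) (E : Set (ℤ × ℤ))
    (hgap : ∀ e ∈ E, 2 ≤ e.2 - e.1) (u : ℤ) : ℤ :=
  (nextC_ex r n E hgap u).choose

theorem nextCF_spec (r n : ℤ) (E : Set (ℤ × ℤ))
    (hgap : ∀ e ∈ E, 2 ≤ e.2 - e.1) (u : ℤ) :
    u + 1 ≤ nextCF r n E hgap u ∧
    (∀ v, u < v → v ≤ nextCF r n E hgap u → ¬ adjGraph r n E u v) ∧
    (∀ v, u < v → adjGraph r n E u v → nextCF r n E hgap u + 1 ≤ v) ∧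
    ((∃ v, u < v ∧ adjGraph r n E u v) →
      adjGraph r n E u (nextCF r n E hgap u + 1)) :=
  (nextC_ex r n E hgap u).choose_spec

noncomputable def chainCF (r n : ℤ) (E : Set (ℤ × ℤ))
    (hgap : ∀ e ∈ E, 2 ≤ e.2 - e.1) (c0 : ℤ) : ℕ → ℤ
  | 0 => c0
  | t + 1 => nextCF r n E hgap (chainCF r n E hgap c0 t)

/-- if `max{j : (i,j) ∈ E} = j_q + 1`, where
`j_q = max{j : (i_min, j) ∈ E}` and `i_min = min{i : (i,j) ∈ E}`, and every
`(i,j) ∈ E` has `j - i ≥ 2`, then for all `n ≥ 3r` the graph `G_n` is not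
cochordal: it contains an induced anticycle of some length `m ≥ 4`. -/
theorem stmt9 (r : ℤ) (hr : 1 ≤ r) (E : Set (ℤ × ℤ)) (hE : E.Nonempty)
    (hEr : ∀ e ∈ E, 1 ≤ e.1 ∧ e.1 < e.2 ∧ e.2 ≤ r)
    (imin jq : ℤ)
    (himin1 : ∃ j, (imin, j) ∈ E) (himin2 : ∀ e ∈ E, imin ≤ e.1)
    (hjq1 : (imin, jq) ∈ E) (hjq2 : ∀ j, (imin, j) ∈ E → j ≤ jq)
    (hmax1 : ∀ e ∈ E, e.2 ≤ jq + 1) (hmax2 : ∃ e ∈ E, e.2 = jq + 1)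
    (hgap : ∀ e ∈ E, 2 ≤ e.2 - e.1)
    (n : ℤ) (hn : 3 * r ≤ n) :
    ∃ m : ℕ, 4 ≤ m ∧ ∃ a : ℕ → ℤ,
      (∀ t, t < m → 1 ≤ a t ∧ a t ≤ n) ∧
      IsInducedAnticycle (adjGraph r n E) m a := by
  -- basic numeric facts
  have hi0 : 1 ≤ imin := (hEr (imin, jq) hjq1).1
  have hjq_r : jq + 1 ≤ r := by
    obtain ⟨e, heE, he2⟩ := hmax2
    have := (hEr e heE).2.2; omega
  have hgap0 : 2 ≤ jq - imin := hgap (imin, jq) hjq1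
  -- the set P = {i : (i, jq+1) ∈ E}
  have hPne : ∃ i : ℤ, (i, jq + 1) ∈ E := by
    obtain ⟨e, heE, he2⟩ := hmax2
    refine ⟨e.1, ?_⟩
    rw [← he2, Prod.mk.eta]; exact heE
  have hPbddA : ∀ i : ℤ, (i, jq + 1) ∈ E → i ≤ jq - 1 := by
    intro i hi
    have : (2 : ℤ) ≤ jq + 1 - i := hgap (i, jq + 1) hi
    omega
  obtain ⟨p, hpE, hpmin⟩ :=
    Int.exists_least_of_bdd (P := fun i => (i, jq + 1) ∈ E)
      ⟨1, fun z hz => (hEr (z, jq + 1) hz).1⟩ hPne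
  obtain ⟨q, hqE, hqmax⟩ :=
    Int.exists_greatest_of_bdd (P := fun i => (i, jq + 1) ∈ E)
      ⟨jq - 1, hPbddA⟩ hPne
  have hpq : p ≤ q := hqmax p hpE
  have hq1 : q ≤ jq - 1 := hPbddA q hqE
  have hp1 : imin + 1 ≤ p := by
    have h1 : imin ≤ p := himin2 (p, jq + 1) hpE
    rcases eq_or_lt_of_le h1 with h | h
    · exfalso
      have : jq + 1 ≤ jq := hjq2 (jq + 1) (by rw [← h] at hpE; exact hpE)
      omega
    · omega
  -- minimum gap over pairs with small first coordinate
  have wspec : ∀ u : ℤ, imin ≤ u →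
      ∃ d : ℤ, (∃ e ∈ E, e.1 ≤ u ∧ e.2 - e.1 = d) ∧
        (∀ e ∈ E, e.1 ≤ u → d ≤ e.2 - e.1) ∧ 2 ≤ d := by
    intro u hu
    obtain ⟨d, hd1, hd2⟩ :=
      Int.exists_least_of_bdd (P := fun d => ∃ e ∈ E, e.1 ≤ u ∧ e.2 - e.1 = d)
        ⟨2, by rintro z ⟨e, heE, _, rfl⟩; exact hgap e heE⟩
        ⟨jq - imin, (imin, jq), hjq1, hu, rfl⟩
    refine ⟨d, hd1, fun e heE heu => hd2 _ ⟨e, heE, heu, rfl⟩, ?_⟩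
    obtain ⟨e, heE, _, hde⟩ := hd1
    have := hgap e heE; omega
  obtain ⟨w0, ⟨e0, he0E, he0u, he0d⟩, hw0min, hw0two⟩ := wspec (p - 1) (by omega)
  -- the chain
  set c : ℕ → ℤ := chainCF r n E hgap (p + w0 - 2) with hcdef
  have hc0 : c 0 = p + w0 - 2 := rfl
  have hcS : ∀ t : ℕ, c (t + 1) = nextCF r n E hgap (c t) := fun t => rfl
  have hnp := fun u : ℤ => nextCF_spec r n E hgap u
  have hstep : ∀ t : ℕ, c t + 1 ≤ c (t + 1) := by
    intro t; rw [hcS t]; exact (hnp (c t)).1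
  have cmono : StrictMono c :=
    strictMono_nat_of_lt_succ fun t => by have := hstep t; omega
  have hgrow : ∀ t : ℕ, c 0 + t ≤ c t := by
    intro t
    induction t with
    | zero => simp
    | succ t ih => have := hstep t; push_cast at ih ⊢; omega
  have hex : ∃ t : ℕ, q + (n - r) < c t := by
    refine ⟨(q + (n - r) - c 0 + 1).toNat, ?_⟩
    have h1 := hgrow ((q + (n - r) - c 0 + 1).toNat)
    have h2 : (q + (n - r) - c 0 + 1 : ℤ) ≤ ((q + (n - r) - c 0 + 1).toNat : ℤ) :=
      Int.self_le_toNat _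
    omega
  haveI : DecidablePred fun t : ℕ => q + (n - r) < c t := Classical.decPred _
  set K := Nat.find hex with hKdef
  have hK : q + (n - r) < c K := Nat.find_spec hex
  have hKmin : ∀ t : ℕ, t < K → c t ≤ q + (n - r) := by
    intro t ht
    have := Nat.find_min hex ht; omega
  have hc0p : p ≤ c 0 := by omega
  have hclow : ∀ t : ℕ, p ≤ c t := fun t =>
    le_trans hc0p (cmono.monotone (Nat.zero_le t))
  have hw0le : w0 ≤ jq - imin :=
    hw0min (imin, jq) hjq1 (show imin ≤ p - 1 by omega)
  have hc0le : c 0 ≤ q + (n - r) := by omega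
  have hK1 : 1 ≤ K := by
    rcases Nat.eq_zero_or_pos K with h0 | h
    · rw [h0] at hK; omega
    · exact h
  -- existence of a neighbor above, with bound
  have muex : ∀ u : ℤ, p ≤ u → u ≤ q + (n - r) →
      ∃ v, u < v ∧ adjGraph r n E u v ∧ v ≤ jq + (n - r) + 1 := by
    intro u hup huq
    by_cases hq : q ≤ u
    · refine ⟨u + (jq + 1 - q), by omega, ?_, by omega⟩
      exact Or.inl ⟨by omega, (q, jq + 1), hqE, show q ≤ u by omega,
        show u - q ≤ u + (jq + 1 - q) - (jq + 1) by omega,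
        show u + (jq + 1 - q) - (jq + 1) ≤ n - r by omega⟩
    · push_neg at hq
      refine ⟨u + (jq - imin), by omega, ?_, by omega⟩
      exact Or.inl ⟨by omega, (imin, jq), hjq1, show imin ≤ u by omega,
        show u - imin ≤ u + (jq - imin) - jq by omega,
        show u + (jq - imin) - jq ≤ n - r by omega⟩
  have hbr : ∀ t : ℕ, t < K → ∃ v, c t < v ∧ adjGraph r n E (c t) v := by
    intro t ht
    obtain ⟨v, h1, h2, _⟩ := muex (c t) (hclow t) (hKmin t ht)
    exact ⟨v, h1, h2⟩
  have hadjnext : ∀ t : ℕ, t < K → adjGraph r n E (c t) (c (t + 1) + 1) := by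
    intro t ht
    have h4 := (hnp (c t)).2.2.2 (hbr t ht)
    rw [hcS t]; exact h4
  have hminadj : ∀ t : ℕ, ∀ v, c t < v → adjGraph r n E (c t) v →
      c (t + 1) + 1 ≤ v := by
    intro t v h1 h2
    rw [hcS t]; exact (hnp (c t)).2.2.1 v h1 h2
  have hnotadj_cons : ∀ t : ℕ, ¬ adjGraph r n E (c t) (c (t + 1)) := by
    intro t
    rw [hcS t]
    exact (hnp (c t)).2.1 _ (by have := (hnp (c t)).1; omega) (le_refl _)
  have hcKle : c K ≤ jq + (n - r) := by
    obtain ⟨K', hK'⟩ : ∃ K', K = K' + 1 := ⟨K - 1, by omega⟩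
    obtain ⟨v, h1, h2, h3⟩ := muex (c K') (hclow K') (hKmin K' (by omega))
    have h4 := hminadj K' v h1 h2
    rw [hK']; omega
  have ctle : ∀ t : ℕ, t ≤ K → c t ≤ jq + (n - r) := by
    intro t ht
    rcases eq_or_lt_of_le ht with h | h
    · rw [h]; exact hcKle
    · have := hKmin t h; omega
  -- adjacency between non-consecutive chain elements
  have chadj : ∀ s t : ℕ, s + 2 ≤ t → t ≤ K → adjGraph r n E (c s) (c t) := by
    intro s t hst htK
    obtain ⟨t', rfl⟩ : ∃ t', t = t' + 1 := ⟨t - 1, by omega⟩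
    have ht'K : t' < K := by omega
    have hsK : s < K := by omega
    have hst' : s < t' := by omega
    have hL := hadjnext t' ht'K
    unfold adjGraph at hL
    rcases hL with ⟨_, e, heE, h1, h2, h3⟩ | ⟨hbad, _⟩
    swap
    · exact absurd hbad (by have := hstep t'; omega)
    have hcs_lt : c s < c (t' + 1) := cmono (by omega)
    have hss : c s < c t' := cmono hst'
    by_cases hie : e.1 ≤ c s
    · exact Or.inl ⟨hcs_lt, e, heE, hie, by omega, by omega⟩
    · push_neg at hie
      have her := hEr e heE
      obtain ⟨w1, ⟨e1, he1E, he1u, he1d⟩, hw1min, hw1two⟩ :=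
        wspec (c s) (by have := hclow s; omega)
      have hs_adj := hadjnext s hsK
      unfold adjGraph at hs_adj
      have hw1reach : c s + w1 ≤ c (t' + 1) := by
        rcases hs_adj with ⟨_, e2, he2E, g1, g2, g3⟩ | ⟨hbad, _⟩
        · have hm := hw1min e2 he2E g1
          have hs1t : c (s + 1) + 1 ≤ c (t' + 1) := by
            have := cmono (show s + 1 < t' + 1 by omega); omega
          omega
        · exact absurd hbad (by have := hstep s; omega)
      by_cases hwin : c (t' + 1) ≤ (n - r) + e1.2
      · exact Or.inl ⟨hcs_lt, e1, he1E, he1u, by omega, by omega⟩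
      · push_neg at hwin
        have he1r := hEr e1 he1E
        have hctle := ctle (t' + 1) htK
        exact Or.inl ⟨hcs_lt, (imin, jq), hjq1,
          show imin ≤ c s by have := hclow s; omega,
          show c s - imin ≤ c (t' + 1) - jq by omega,
          show c (t' + 1) - jq ≤ n - r by omega⟩
  -- adjacency of the bottom anchor p - 1 with chain elements
  have x0adj : ∀ t : ℕ, 1 ≤ t → t ≤ K → adjGraph r n E (p - 1) (c t) := by
    intro t h1 htK
    have hct : c 0 + 1 ≤ c t := by
      have := cmono (show 0 < t by omega); omega
    have hctle := ctle t htK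
    have he0r := hEr e0 he0E
    by_cases hwin : c t ≤ (n - r) + e0.2
    · exact Or.inl ⟨by omega, e0, he0E, he0u, by omega, by omega⟩
    · push_neg at hwin
      exact Or.inl ⟨by omega, (imin, jq), hjq1,
        show imin ≤ p - 1 by omega,
        show p - 1 - imin ≤ c t - jq by omega,
        show c t - jq ≤ n - r by omega⟩
  -- adjacency of the top anchor with chain elements below c K
  have Badj : ∀ t : ℕ, t < K → adjGraph r n E (c t) (jq + 1 + (n - r)) := by
    intro t htK
    have h1 := hclow t
    have h2 := hKmin t htK
    by_cases hw : c t ≤ p + (n - r)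
    · exact Or.inl ⟨by omega, (p, jq + 1), hpE, show p ≤ c t by omega,
        show c t - p ≤ jq + 1 + (n - r) - (jq + 1) by omega,
        show jq + 1 + (n - r) - (jq + 1) ≤ n - r by omega⟩
    · exact Or.inl ⟨by omega, (q, jq + 1), hqE, show q ≤ c t by omega,
        show c t - q ≤ jq + 1 + (n - r) - (jq + 1) by omega,
        show jq + 1 + (n - r) - (jq + 1) ≤ n - r by omega⟩
  -- non-adjacencies
  have hcKB : ¬ adjGraph r n E (c K) (jq + 1 + (n - r)) := by
    intro h
    unfold adjGraph at h
    rcases h with ⟨_, e, heE, h1, h2, h3⟩ | ⟨hlt, _⟩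
    · have hm := hmax1 e heE
      have he2 : e.2 = jq + 1 := by omega
      have heP : (e.1, jq + 1) ∈ E := by rw [← he2, Prod.mk.eta]; exact heE
      have := hqmax e.1 heP
      omega
    · omega
  have hx0B : ¬ adjGraph r n E (p - 1) (jq + 1 + (n - r)) := by
    intro h
    unfold adjGraph at h
    rcases h with ⟨_, e, heE, h1, h2, h3⟩ | ⟨hlt, _⟩
    · have hm := hmax1 e heE
      have he2 : e.2 = jq + 1 := by omega
      have heP : (e.1, jq + 1) ∈ E := by rw [← he2, Prod.mk.eta]; exact heE
      have := hpmin e.1 heP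
      omega
    · omega
  have hx0c0 : ¬ adjGraph r n E (p - 1) (c 0) := by
    intro h
    unfold adjGraph at h
    rcases h with ⟨_, e, heE, h1, h2, _⟩ | ⟨hlt, _⟩
    · have := hw0min e heE h1
      omega
    · omega
  -- the vertex function
  obtain ⟨a, ha0, hamid, haB⟩ : ∃ a : ℕ → ℤ, a 0 = p - 1 ∧
      (∀ t : ℕ, 1 ≤ t → t ≤ K + 1 → a t = c (t - 1)) ∧
      (∀ t : ℕ, K + 2 ≤ t → a t = jq + 1 + (n - r)) := by
    refine ⟨fun t => if t = 0 then p - 1 else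
      if t ≤ K + 1 then c (t - 1) else jq + 1 + (n - r), rfl, ?_, ?_⟩
    · intro t h1 h2
      simp only [if_neg (by omega : ¬ t = 0), if_pos h2]
    · intro t h
      simp only [if_neg (by omega : ¬ t = 0), if_neg (by omega : ¬ t ≤ K + 1)]
  have haMono : ∀ s t : ℕ, s < t → t ≤ K + 2 → a s < a t := by
    intro s t hst htK
    rcases Nat.eq_zero_or_pos s with rfl | hs
    · rw [ha0]
      by_cases h : t ≤ K + 1
      · rw [hamid t (by omega) h]; have := hclow (t - 1); omega
      · rw [haB t (by omega)]; omega
    · by_cases h : t ≤ K + 1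
      · rw [hamid s (by omega) (by omega), hamid t (by omega) h]
        exact cmono (by omega)
      · rw [hamid s (by omega) (by omega), haB t (by omega)]
        have h1 := ctle (s - 1) (by omega); omega
  refine ⟨K + 3, by omega, a, ?_, ?_, ?_, ?_⟩
  · -- bounds
    intro t ht
    rcases Nat.eq_zero_or_pos t with rfl | h1
    · rw [ha0]; omega
    by_cases h2 : t ≤ K + 1
    · rw [hamid t h1 h2]
      have h3 := hclow (t - 1)
      have h4 := ctle (t - 1) (by omega)
      omega
    · rw [haB t (by omega)]; omega
  · -- distinctness
    intro s hs t ht hne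
    rcases lt_trichotomy s t with h | h | h
    · exact ne_of_lt (haMono s t h (by omega))
    · exact absurd h hne
    · exact (ne_of_lt (haMono t s h (by omega))).symm
  · -- consecutive non-adjacency
    intro t ht
    by_cases hlast : t = K + 2
    · subst hlast
      have hmod : (K + 2 + 1) % (K + 3) = 0 := by
        rw [show K + 2 + 1 = K + 3 from rfl, Nat.mod_self]
      rw [hmod, ha0, haB (K + 2) le_rfl]
      intro h; exact hx0B (adjGraph_symm' h)
    · have hmod : (t + 1) % (K + 3) = t + 1 := Nat.mod_eq_of_lt (by omega)
      rw [hmod]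
      rcases Nat.eq_zero_or_pos t with rfl | h1
      · rw [ha0, hamid 1 le_rfl (by omega)]
        exact hx0c0
      by_cases h2 : t ≤ K
      · rw [hamid t h1 (by omega), hamid (t + 1) (by omega) (by omega)]
        have h := hnotadj_cons (t - 1)
        rw [show t - 1 + 1 = t from by omega] at h
        have he : t + 1 - 1 = t := rfl
        rw [he]
        exact h
      · have h3 : t = K + 1 := by omega
        subst h3
        rw [hamid (K + 1) (by omega) le_rfl, haB (K + 2) le_rfl]
        rw [show K + 1 - 1 = K from by omega]
        exact hcKB
  · -- non-consecutive adjacency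
    have main : ∀ s t : ℕ, s < t → t ≤ K + 2 → t ≠ s + 1 →
        (t = K + 2 → 1 ≤ s) → adjGraph r n E (a s) (a t) := by
      intro s t hst htK hne hlastcase
      by_cases htop : t = K + 2
      · have hs1 : 1 ≤ s := hlastcase htop
        have hsK : s ≤ K := by omega
        rw [hamid s (by omega) (by omega), haB t (by omega)]
        exact Badj (s - 1) (by omega)
      · have htK1 : t ≤ K + 1 := by omega
        rcases Nat.eq_zero_or_pos s with rfl | hs
        · rw [ha0, hamid t (by omega) htK1]
          exact x0adj (t - 1) (by omega) (by omega)
        · rw [hamid s (by omega) (by omega), hamid t (by omega) htK1]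
          exact chadj (s - 1) (t - 1) (by omega) (by omega)
    intro s hs t ht hne h1 h2
    rcases lt_trichotomy s t with h | h | h
    · have hm1 : (s + 1) % (K + 3) = s + 1 := Nat.mod_eq_of_lt (by omega)
      rw [hm1] at h1
      refine main s t h (by omega) (by omega) ?_
      intro htop
      rw [htop] at h2
      rw [show K + 2 + 1 = K + 3 from rfl, Nat.mod_self] at h2
      omega
    · exact absurd h hne
    · have hm2 : (t + 1) % (K + 3) = t + 1 := Nat.mod_eq_of_lt (by omega)
      rw [hm2] at h2
      apply adjGraph_symm'
      refine main t s h (by omega) (by omega) ?_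
      intro htop
      rw [htop] at h1
      rw [show K + 2 + 1 = K + 3 from rfl, Nat.mod_self] at h1
      omega
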